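/- arXiv:math/0012214 — 2 statements merged into one kernel-verified Lean document; each statement's English description precedes it below -/
import Mathlib

section
/- Main theorem: Let F be a finite field with 2^n elements and let α, β ∈ F satisfy αβ ≠ 0 and α ≠ β. Suppose the binary quadratic forms x² + y² + αxy and x² + z² + βxz are irreducible over F (equivalently, the polynomials X² + αX + 1 and X² + βX + 1 have no root in F), so that the degenerate conics C₁ = 0 and C₂ = 0 of the pencil λ(x² + y² + αxy) + μ(x² + z² + βxz) are conjugate imaginary line pairs. Then the third degenerate conic of the pencil, C₃ = (α² + β²)x² + β²y² + α²z² + αβ²xy + α²βxz = 0, is a REAL line pair: there exist coefficients a, b, c, d, e, f ∈ F such that, as polynomials in F[x, y, z], (α² + β²)x² + β²y² + α²z² + αβ²xy + α²βxz = (a·x + b·y + c·z)(d·x + e·y + f·z). -/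
open MvPolynomial

/-- Factorization of a binary quadric `Xi² + Xj² + θ XiXj` from a root pair. -/
lemma binary_factor {F : Type*} [Field F] (i j : Fin 3) (θ u v : F)
    (huv : u * v = 1) (hsum : u + v = θ) :
    (X i ^ 2 + X j ^ 2 + C θ * X i * X j : MvPolynomial (Fin 3) F)
      = (C 1 * X i + C u * X j) * (C 1 * X i + C v * X j) := by
  have h1 : (C u * C v : MvPolynomial (Fin 3) F) = 1 := by
    rw [← C_mul, huv, C_1]
  have h3 : (C u + C v : MvPolynomial (Fin 3) F) = C θ := by
    rw [← C_add, hsum]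
  simp only [C_1, one_mul]
  linear_combination (-(X j : MvPolynomial (Fin 3) F) ^ 2) * h1 - X i * X j * h3

/-- **Main theorem.** Let `F = GF(2^n)` and `α β ∈ F` with `αβ ≠ 0`, `α ≠ β`.
Suppose the binary quadratic forms `x² + y² + αxy` and `x² + z² + βxz` are irreducible
over `F` (i.e. do not factor into two linear forms over `F`), so the degenerate conics
`C₁ = 0`, `C₂ = 0` of the pencil are conjugate imaginary line pairs. Then the third
degenerate conic `C₃ = (α² + β²)x² + β²y² + α²z² + αβ²xy + α²βxz = 0` is a *real*
line pair: its form factors as a product of two linear forms over `F`. -/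
theorem third_degenerate_conic_is_real_line_pair (F : Type*) [Field F] [Fintype F] (n : ℕ)
    (hcard : Fintype.card F = 2 ^ n) (α β : F) (hαβ : α * β ≠ 0) (hne : α ≠ β)
    (hC1 : ¬ ∃ a b c d : F,
        (X 0 ^ 2 + X 1 ^ 2 + C α * X 0 * X 1 : MvPolynomial (Fin 3) F)
          = (C a * X 0 + C b * X 1) * (C c * X 0 + C d * X 1))
    (hC2 : ¬ ∃ a b c d : F,
        (X 0 ^ 2 + X 2 ^ 2 + C β * X 0 * X 2 : MvPolynomial (Fin 3) F)
          = (C a * X 0 + C b * X 2) * (C c * X 0 + C d * X 2)) :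
    ∃ a b c d e f : F,
      (C (α ^ 2 + β ^ 2) * X 0 ^ 2 + C (β ^ 2) * X 1 ^ 2 + C (α ^ 2) * X 2 ^ 2
          + C (α * β ^ 2) * X 0 * X 1 + C (α ^ 2 * β) * X 0 * X 2 : MvPolynomial (Fin 3) F)
        = (C a * X 0 + C b * X 1 + C c * X 2) * (C d * X 0 + C e * X 1 + C f * X 2) := by
  have hα0 : α ≠ 0 := left_ne_zero_of_mul hαβ
  have hβ0 : β ≠ 0 := right_ne_zero_of_mul hαβ
  -- characteristic 2
  have hn : n ≠ 0 := by
    rintro rfl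
    have := Fintype.one_lt_card (α := F)
    omega
  have h2 : (2 : F) = 0 := by
    have h := FiniteField.cast_card_eq_zero F
    rw [hcard] at h
    push_cast at h
    exact (pow_eq_zero_iff hn).mp h
  -- the additive map y ↦ y² + y
  let φ : F →+ F := AddMonoidHom.mk' (fun y => y ^ 2 + y)
    (fun a b => by linear_combination a * b * h2)
  have hφ : ∀ y : F, φ y = y ^ 2 + y := fun _ => rfl
  -- kernel has 2 elements
  have hkset : (φ.ker : Set F) = {0, 1} := by
    ext y
    simp only [SetLike.mem_coe, AddMonoidHom.mem_ker, hφ, Set.mem_insert_iff,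
      Set.mem_singleton_iff]
    constructor
    · intro hy
      rcases mul_eq_zero.mp (show y * (y + 1) = 0 by linear_combination hy) with h | h
      · exact Or.inl h
      · right; linear_combination h - h2
    · rintro (rfl | rfl)
      · ring
      · linear_combination h2
  have hK : Nat.card φ.ker = 2 := by
    calc Nat.card φ.ker = Nat.card ((φ.ker : Set F)) := rfl
      _ = 2 := by rw [hkset, Nat.card_coe_set_eq, Set.ncard_pair (zero_ne_one (α := F))]
  -- the image (range) has index 2
  have hidx : φ.range.index = 2 := by
    have h1 := AddSubgroup.card_mul_index φ.range
    have h2' := AddSubgroup.index_ker φ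
    have h3 := AddSubgroup.card_mul_index φ.ker
    rw [hK] at h3
    have hmul : Nat.card φ.range * φ.range.index = Nat.card φ.range * 2 := by
      rw [h1, ← h3, h2']; ring
    exact Nat.eq_of_mul_eq_mul_left Nat.card_pos hmul
  -- `1/α²` is not in the range, by `hC1`
  have hmem : ∀ c : F, c ∈ φ.range ↔ ∃ y : F, y ^ 2 + y = c := by
    intro c
    constructor
    · rintro ⟨y, rfl⟩; exact ⟨y, rfl⟩
    · rintro ⟨y, hy⟩; exact ⟨y, hy⟩
  have hαnot : (1 / α ^ 2 : F) ∉ φ.range := by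
    intro hmemα
    obtain ⟨y, hy⟩ := (hmem _).mp hmemα
    apply hC1
    refine ⟨1, α * y, 1, α * y + α, binary_factor 0 1 α (α * y) (α * y + α) ?_ ?_⟩
    · have hinv : α ^ 2 * (1 / α ^ 2) = 1 := by field_simp
      linear_combination α ^ 2 * hy + hinv
    · linear_combination (α * y) * h2
  have hβnot : (1 / β ^ 2 : F) ∉ φ.range := by
    intro hmemβ
    obtain ⟨y, hy⟩ := (hmem _).mp hmemβ
    apply hC2
    refine ⟨1, β * y, 1, β * y + β, binary_factor 0 2 β (β * y) (β * y + β) ?_ ?_⟩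
    · have hinv : β ^ 2 * (1 / β ^ 2) = 1 := by field_simp
      linear_combination β ^ 2 * hy + hinv
    · linear_combination (β * y) * h2
  -- hence the sum is in the range (index-two argument)
  have hsum_mem : (1 / α ^ 2 + 1 / β ^ 2 : F) ∈ φ.range := by
    rw [AddSubgroup.add_mem_iff_of_index_two hidx]
    exact iff_of_false hαnot hβnot
  obtain ⟨y, hy⟩ := (hmem _).mp hsum_mem
  -- the root pair for the third conic
  set s : F := α * β * y with hs
  set t : F := α * β * y + α * β with ht
  have hy' : α ^ 2 * β ^ 2 * (y ^ 2 + y) = β ^ 2 + α ^ 2 := by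
    rw [hy]; field_simp
  have hst : s * t = α ^ 2 + β ^ 2 := by
    rw [hs, ht]; linear_combination hy'
  have hsum : s + t = α * β := by
    rw [hs, ht]; linear_combination (α * β * y) * h2
  refine ⟨s, β, α, t, β, α, ?_⟩
  have e1 : (C s * C t : MvPolynomial (Fin 3) F) = C (α ^ 2 + β ^ 2) := by
    rw [← C_mul, hst]
  have e2 : ((C s + C t) * C β : MvPolynomial (Fin 3) F) = C (α * β ^ 2) := by
    rw [← C_add, ← C_mul]; exact congrArg C (by rw [hsum]; ring)
  have e3 : ((C s + C t) * C α : MvPolynomial (Fin 3) F) = C (α ^ 2 * β) := by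
    rw [← C_add, ← C_mul]; exact congrArg C (by rw [hsum]; ring)
  have eβ : (C β * C β : MvPolynomial (Fin 3) F) = C (β ^ 2) := by
    rw [← C_mul, sq]
  have eα : (C α * C α : MvPolynomial (Fin 3) F) = C (α ^ 2) := by
    rw [← C_mul, sq]
  have e2P : (C (2 : F) : MvPolynomial (Fin 3) F) = 0 := by rw [h2, C_0]
  have eC2 : (2 : MvPolynomial (Fin 3) F) = 0 := by
    rw [← map_ofNat (C : F →+* MvPolynomial (Fin 3) F) 2]
    exact e2P
  linear_combination (-(X 0 : MvPolynomial (Fin 3) F) ^ 2) * e1 - X 1 ^ 2 * eβ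
    - X 2 ^ 2 * eα - X 0 * X 1 * e2 - X 0 * X 2 * e3
    - C α * C β * X 1 * X 2 * eC2
end

section
/- Let F be a finite field with 2^n elements and let α, β ∈ F satisfy αβ ≠ 0 and α ≠ β. If the polynomials X² + αX + 1 and X² + βX + 1 are both irreducible over F, then with γ = αβ/(α+β) the polynomial X² + γX + 1 has a root in F (i.e., X² + γX + 1 is reducible in F[X]). -/
open Polynomial

/-!
In characteristic 2 the substitution `x = c y` turns `x² + c x + 1 = 0` into
`y² + y = c⁻²`, so `X² + c X + 1` has a root exactly when `c⁻²` lies in the image `H` of the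
additive map `y ↦ y² + y`. Its kernel is `{0, 1}`, so over a finite field `H` has index 2 and
the sum of two elements outside `H` lies in `H`. Since `γ⁻¹ = α⁻¹ + β⁻¹`, squaring gives
`γ⁻² = α⁻² + β⁻²`, a sum of two elements outside `H`.
-/

section ArtinSchreier

variable (R : Type*) [CommRing R] [CharP R 2]

def artinSchreier : R →+ R where
  toFun x := x ^ 2 + x
  map_zero' := by simp
  map_add' x y := by rw [CharTwo.add_sq]; ring

variable {R}

@[simp]
theorem artinSchreier_apply (x : R) : artinSchreier R x = x ^ 2 + x := rfl

theorem ker_artinSchreier [IsDomain R] : ((artinSchreier R).ker : Set R) = {0, 1} := by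
  ext x
  have hfactor : x ^ 2 + x = x * (x - 1) := by rw [CharTwo.sub_eq_add]; ring
  simp [AddMonoidHom.mem_ker, hfactor, sub_eq_zero]

theorem index_range_artinSchreier [IsDomain R] [Finite R] :
    (artinSchreier R).range.index = 2 := by
  rw [AddSubgroup.index_range]
  change Nat.card ((artinSchreier R).ker : Set R) = 2
  rw [Nat.card_coe_set_eq, ker_artinSchreier, Set.ncard_pair zero_ne_one]

theorem add_mem_range_artinSchreier [IsDomain R] [Finite R] {a b : R}
    (ha : a ∉ (artinSchreier R).range) (hb : b ∉ (artinSchreier R).range) :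
    a + b ∈ (artinSchreier R).range :=
  (AddSubgroup.add_mem_iff_of_index_two index_range_artinSchreier).mpr (iff_of_false ha hb)

end ArtinSchreier

theorem exists_quadratic_root_iff_mem_range_artinSchreier {K : Type*} [Field K] [CharP K 2]
    (c : K) : (∃ x, x ^ 2 + c * x + 1 = 0) ↔ c⁻¹ ^ 2 ∈ (artinSchreier K).range := by
  rcases eq_or_ne c 0 with rfl | hc
  -- `0⁻¹ = 0`, and `X² + 1 = (X + 1)²` has the root `1`
  · exact iff_of_true ⟨1, by simp [CharTwo.add_self_eq_zero]⟩ ⟨0, by simp⟩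
  simp only [AddMonoidHom.mem_range, artinSchreier_apply]
  constructor
  · rintro ⟨x, hx⟩
    refine ⟨c⁻¹ * x, ?_⟩
    field_simp
    linear_combination hx - CharTwo.two_eq_zero (R := K)
  · rintro ⟨y, hy⟩
    refine ⟨c * y, ?_⟩
    field_simp at hy
    linear_combination hy + CharTwo.two_eq_zero (R := K)

theorem irreducible_quadratic_iff {K : Type*} [Field K] (c : K) :
    Irreducible (X ^ 2 + C c * X + 1 : K[X]) ↔ ¬ ∃ x, x ^ 2 + c * x + 1 = 0 := by
  have hdeg : (X ^ 2 + C c * X + 1 : K[X]).natDegree = 2 := by compute_degree!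
  have hne : (X ^ 2 + C c * X + 1 : K[X]) ≠ 0 := ne_zero_of_natDegree_gt (n := 0) (by omega)
  rw [irreducible_iff_roots_eq_zero_of_degree_le_three (by omega) (by omega),
    Multiset.eq_zero_iff_forall_notMem]
  simp [mem_roots hne]

theorem gamma_quadratic_has_root_general (F : Type*) [Field F] [Fintype F] (n : ℕ)
    (hcard : Fintype.card F = 2 ^ n) (α β : F) (hαβ : α * β ≠ 0)
    (hα : Irreducible (X ^ 2 + C α * X + 1 : F[X]))
    (hβ : Irreducible (X ^ 2 + C β * X + 1 : F[X]))
    (γ : F) (hγ : γ = α * β / (α + β)) :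
    (∃ x : F, x ^ 2 + γ * x + 1 = 0) ∧
      ¬ Irreducible (X ^ 2 + C γ * X + 1 : F[X]) := by
  have : CharP F 2 := charP_of_card_eq_prime_pow hcard
  obtain ⟨hα0, hβ0⟩ := mul_ne_zero_iff.mp hαβ
  have hγinv : γ⁻¹ = α⁻¹ + β⁻¹ := by rw [hγ, inv_div, inv_add_inv hα0 hβ0, add_comm]
  have hnotMem (c : F) (hc : Irreducible (X ^ 2 + C c * X + 1 : F[X])) :
      c⁻¹ ^ 2 ∉ (artinSchreier F).range :=
    (exists_quadratic_root_iff_mem_range_artinSchreier c).not.mp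
      ((irreducible_quadratic_iff c).mp hc)
  have hroot : ∃ x : F, x ^ 2 + γ * x + 1 = 0 := by
    rw [exists_quadratic_root_iff_mem_range_artinSchreier, hγinv, CharTwo.add_sq]
    exact add_mem_range_artinSchreier (hnotMem α hα) (hnotMem β hβ)
  exact ⟨hroot, fun hγirr => (irreducible_quadratic_iff γ).mp hγirr hroot⟩

/-- Let `F = GF(2^n)` and `α β ∈ F` with `αβ ≠ 0`, `α ≠ β`. If `X² + αX + 1` and
`X² + βX + 1` are both irreducible over `F`, then with `γ = αβ/(α+β)` the polynomial
`X² + γX + 1` has a root in `F`, i.e. `X² + γX + 1` is reducible in `F[X]`. -/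
theorem gamma_quadratic_has_root (F : Type*) [Field F] [Fintype F] (n : ℕ)
    (hcard : Fintype.card F = 2 ^ n) (α β : F) (hαβ : α * β ≠ 0) (hne : α ≠ β)
    (hα : Irreducible (X ^ 2 + C α * X + 1 : F[X]))
    (hβ : Irreducible (X ^ 2 + C β * X + 1 : F[X]))
    (γ : F) (hγ : γ = α * β / (α + β)) :
    (∃ x : F, x ^ 2 + γ * x + 1 = 0) ∧
      ¬ Irreducible (X ^ 2 + C γ * X + 1 : F[X]) :=
  gamma_quadratic_has_root_general F n hcard α β hαβ hα hβ γ hγ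
end
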